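/- Suppose assumptions (A1) and (A2) hold, the continuity bound b(w,v) ≤ C₂‖w‖_U‖v‖_V holds, and a Fortin operator Π with constant C_Π > 0 exists. Then the two-sided norm equivalence (C₁/C_Π)‖w‖_U ≤ ‖Tʳw‖_V ≤ C₂‖w‖_U holds for every w ∈ U_h. -/

import Mathlib

/-!
The upper bound is Cauchy–Schwarz applied to `‖Tʳw‖² = b(w, Tʳw)`.

For the lower bound let `S : V → U` be the Riesz representative of `b`, `⟪S v, u⟫ = b(u, v)`.
By (A2) it is bounded below by `C₁`, so its range is closed, and by (A1) that range has trivial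
orthogonal complement; hence `S` is onto. Writing `w = S v` gives `C₁‖v‖ ≤ ‖w‖` and
`‖w‖² = b(w, v) = b(w, Πv) = ⟪Tʳw, Πv⟫ ≤ C_Π ‖Tʳw‖ ‖v‖`.
-/

open scoped InnerProductSpace

lemma le_of_sq_le_mul {R : Type*} [Ring R] [LinearOrder R] [IsStrictOrderedRing R] {a k : R}
    (hk : 0 ≤ k) (h : a ^ 2 ≤ k * a) : a ≤ k :=
  not_lt.1 fun hlt => h.not_gt (sq a ▸ mul_lt_mul_of_pos_right hlt (hk.trans_lt hlt))

lemma LinearMap.norm_apply₂_le_of_apply₂_le {E F : Type*} [SeminormedAddCommGroup E]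
    [Module ℝ E] [SeminormedAddCommGroup F] [Module ℝ F] (b : E →ₗ[ℝ] F →ₗ[ℝ] ℝ) {C : ℝ}
    (hb : ∀ x y, b x y ≤ C * ‖x‖ * ‖y‖) (x : E) (y : F) : ‖b x y‖ ≤ C * ‖x‖ * ‖y‖ := by
  have hneg := hb x (-y)
  rw [map_neg, norm_neg] at hneg
  exact abs_le.2 ⟨by linarith, hb x y⟩

theorem iSup_inner_div_norm_le {E : Type*} [NormedAddCommGroup E] [InnerProductSpace ℝ E]
    (x : E) : ⨆ y : {y : E // y ≠ 0}, ⟪x, y.1⟫_ℝ / ‖y.1‖ ≤ ‖x‖ :=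
  Real.iSup_le (fun _ => div_le_of_le_mul₀ (norm_nonneg _) (norm_nonneg _) (real_inner_le_norm _ _))
    (norm_nonneg _)

theorem LinearMap.exists_inner_eq_of_norm_le {E F : Type*} [NormedAddCommGroup E]
    [InnerProductSpace ℝ E] [CompleteSpace E] [NormedAddCommGroup F] [NormedSpace ℝ F]
    (b : E →ₗ[ℝ] F →ₗ[ℝ] ℝ) (C : ℝ) (hb : ∀ x y, ‖b x y‖ ≤ C * ‖x‖ * ‖y‖) :
    ∃ S : F →L[ℝ] E, ∀ y x, ⟪S y, x⟫_ℝ = b x y :=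
  ⟨(InnerProductSpace.toDual ℝ E).symm.toContinuousLinearEquiv.toContinuousLinearMap ∘L
      (b.mkContinuous₂ C hb).flip,
    fun _ _ => InnerProductSpace.toDual_symm_apply⟩

theorem ContinuousLinearMap.range_eq_top_of_antilipschitz {𝕜 E F : Type*} [RCLike 𝕜]
    [NormedAddCommGroup E] [InnerProductSpace 𝕜 E] [NormedAddCommGroup F] [NormedSpace 𝕜 F]
    [CompleteSpace F] (S : F →L[𝕜] E) {K : NNReal} (hS : AntilipschitzWith K S)
    (h : S.rangeᗮ = ⊥) : S.range = ⊤ := by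
  have : CompleteSpace S.range :=
    (hS.isComplete_range S.uniformContinuous).completeSpace_coe
  exact Submodule.orthogonal_eq_bot_iff.mp h

theorem LinearMap.exists_apply_eq_norm_sq_of_infSup {U V : Type*} [NormedAddCommGroup U]
    [InnerProductSpace ℝ U] [CompleteSpace U] [NormedAddCommGroup V] [NormedSpace ℝ V]
    [CompleteSpace V] (b : U →ₗ[ℝ] V →ₗ[ℝ] ℝ) {C₁ C₂ : ℝ} (hC₁ : 0 < C₁)
    (hb : ∀ w v, ‖b w v‖ ≤ C₂ * ‖w‖ * ‖v‖)
    (hA1 : ∀ w : U, (∀ v : V, b w v = 0) → w = 0)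
    (hA2 : ∀ v : V, C₁ * ‖v‖ ≤ ⨆ w : {w : U // w ≠ 0}, b w.1 v / ‖w.1‖) (w : U) :
    ∃ v, b w v = ‖w‖ ^ 2 ∧ C₁ * ‖v‖ ≤ ‖w‖ := by
  obtain ⟨S, hS⟩ := b.exists_inner_eq_of_norm_le C₂ hb
  have hbelow : ∀ v, C₁ * ‖v‖ ≤ ‖S v‖ := fun v =>
    (hA2 v).trans (by simpa only [hS] using iSup_inner_div_norm_le (S v))
  have hanti : AntilipschitzWith (Real.toNNReal C₁⁻¹) S := S.antilipschitz_of_bound fun v => by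
    rw [Real.coe_toNNReal _ (inv_nonneg.2 hC₁.le), ← div_eq_inv_mul, le_div_iff₀' hC₁]
    exact hbelow v
  have horth : S.rangeᗮ = ⊥ := (Submodule.eq_bot_iff _).2 fun u hu =>
    hA1 u fun v => by rw [← hS]; exact hu _ ⟨v, rfl⟩
  obtain ⟨v, rfl⟩ : w ∈ S.range := S.range_eq_top_of_antilipschitz hanti horth ▸ Submodule.mem_top
  exact ⟨v, (hS v (S v)).symm.trans (real_inner_self_eq_norm_sq _), hbelow v⟩

theorem Tr_norm_equivalence_general
    {U V : Type*} [NormedAddCommGroup U] [InnerProductSpace ℝ U] [CompleteSpace U]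
    [NormedAddCommGroup V] [InnerProductSpace ℝ V] [CompleteSpace V]
    (b : U →ₗ[ℝ] V →ₗ[ℝ] ℝ) (C₁ C₂ Cpi : ℝ)
    (hC₁ : 0 < C₁) (hC₂ : 0 ≤ C₂) (hCpi : 0 < Cpi)
    -- (A1)
    (hA1 : ∀ w : U, (∀ v : V, b w v = 0) → w = 0)
    -- (A2)
    (hA2 : ∀ v : V, C₁ * ‖v‖ ≤ ⨆ w : {w : U // w ≠ 0}, b w.1 v / ‖w.1‖)
    -- continuity bound
    (hb : ∀ (w : U) (v : V), b w v ≤ C₂ * ‖w‖ * ‖v‖)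
    -- discrete spaces
    (Uh : Submodule ℝ U) (Vr : Submodule ℝ V)
    -- trial-to-test operator
    (T : U →ₗ[ℝ] V) (hTmem : ∀ w : U, T w ∈ Vr)
    (hT : ∀ w : U, ∀ v ∈ Vr, ⟪T w, v⟫_ℝ = b w v)
    -- Fortin operator
    (Pi : V →ₗ[ℝ] V) (hPimem : ∀ v : V, Pi v ∈ Vr)
    (hPi : ∀ w ∈ Uh, ∀ v : V, b w (v - Pi v) = 0)
    (hPin : ∀ v : V, ‖Pi v‖ ≤ Cpi * ‖v‖) :
    ∀ w ∈ Uh, C₁ / Cpi * ‖w‖ ≤ ‖T w‖ ∧ ‖T w‖ ≤ C₂ * ‖w‖ := by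
  intro w hw
  have hTw : ‖T w‖ ^ 2 = b w (T w) := by rw [← hT w _ (hTmem w), real_inner_self_eq_norm_sq]
  refine ⟨?_, le_of_sq_le_mul (by positivity) (hTw ▸ hb w (T w))⟩
  obtain ⟨v, hwv, hv⟩ :=
    b.exists_apply_eq_norm_sq_of_infSup hC₁ (b.norm_apply₂_le_of_apply₂_le hb) hA1 hA2 w
  have hw_le : ‖w‖ ≤ ‖T w‖ * Cpi / C₁ := le_of_sq_le_mul (by positivity) <| calc
    ‖w‖ ^ 2 = b w (Pi v) := by rw [← hwv, ← sub_eq_zero, ← map_sub, hPi w hw v]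
    _ = ⟪T w, Pi v⟫_ℝ := (hT w _ (hPimem v)).symm
    _ ≤ ‖T w‖ * ‖Pi v‖ := real_inner_le_norm _ _
    _ ≤ ‖T w‖ * Cpi * ‖v‖ := by rw [mul_assoc]; gcongr; exact hPin v
    _ ≤ ‖T w‖ * Cpi / C₁ * ‖w‖ := by
      rw [div_mul_eq_mul_div, le_div_iff₀ hC₁, mul_assoc]; gcongr; linarith
  rwa [div_mul_eq_mul_div, div_le_iff₀ hCpi, ← le_div_iff₀' hC₁]

/-- Two-sided norm equivalence `(C₁/C_Π)‖w‖_U ≤ ‖Tʳw‖_V ≤ C₂‖w‖_U` on `U_h`. -/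
theorem Tr_norm_equivalence
    {U V : Type*} [NormedAddCommGroup U] [InnerProductSpace ℝ U] [CompleteSpace U]
    [NormedAddCommGroup V] [InnerProductSpace ℝ V] [CompleteSpace V]
    (b : U →ₗ[ℝ] V →ₗ[ℝ] ℝ) (C₁ C₂ Cpi : ℝ)
    (hC₁ : 0 < C₁) (hC₂ : 0 ≤ C₂) (hCpi : 0 < Cpi)
    -- (A1)
    (hA1 : ∀ w : U, (∀ v : V, b w v = 0) → w = 0)
    -- (A2)
    (hA2 : ∀ v : V, C₁ * ‖v‖ ≤ ⨆ w : {w : U // w ≠ 0}, b w.1 v / ‖w.1‖)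
    -- continuity bound
    (hb : ∀ (w : U) (v : V), b w v ≤ C₂ * ‖w‖ * ‖v‖)
    -- discrete spaces
    (Uh : Submodule ℝ U) (Vr : Submodule ℝ V)
    [FiniteDimensional ℝ Uh] [FiniteDimensional ℝ Vr]
    -- trial-to-test operator
    (T : U →ₗ[ℝ] V) (hTmem : ∀ w : U, T w ∈ Vr)
    (hT : ∀ w : U, ∀ v ∈ Vr, ⟪T w, v⟫_ℝ = b w v)
    -- Fortin operator
    (Pi : V →ₗ[ℝ] V) (hPimem : ∀ v : V, Pi v ∈ Vr)
    (hPi : ∀ w ∈ Uh, ∀ v : V, b w (v - Pi v) = 0)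
    (hPin : ∀ v : V, ‖Pi v‖ ≤ Cpi * ‖v‖) :
    ∀ w ∈ Uh, C₁ / Cpi * ‖w‖ ≤ ‖T w‖ ∧ ‖T w‖ ≤ C₂ * ‖w‖ :=
  Tr_norm_equivalence_general b C₁ C₂ Cpi hC₁ hC₂ hCpi hA1 hA2 hb Uh Vr T hTmem hT Pi hPimem hPi
    hPin
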